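/- arXiv:1807.00352 — 3 statements merged into one kernel-verified Lean document; each statement's English description precedes it below -/
import Mathlib

section
/- Let R ≥ 2 be an integer, ρ = 1/R, L ≥ 2R, and define h(x) = (ρ²/2)(L-1-x)(L-x) + 1 - (1-ρ)^{x-L+R+1} for real x. Then h is strictly increasing on the interval [L-R+1, L-1]. -/
/-!
Write `a = 1 - ρ` and `t = x - L + R + 1 ∈ [2, R]`; since `ρ R = 1`, the derivative of `h` is
`ρ² t - ρ - ρ²/2 - log a · a^t`. Bounding `a^(t-2)` below by its tangent `1 + (t - 2) log a`
and using `-a log a ≤ ρ` removes the dependence on `t`, which leaves the value at `t = 2`,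
`(3/2)ρ² - ρ - log a · a²`; the series bound `-log (1 - ρ) ≥ ρ + ρ²/2` makes it at least `ρ⁴/2`.
-/

open Real

lemma Real.add_sq_div_two_le_neg_log_one_sub {x : ℝ} (hx₀ : 0 ≤ x) (hx₁ : x < 1) :
    x + x ^ 2 / 2 ≤ -log (1 - x) := by
  have hsum := hasSum_pow_div_log_of_abs_lt_one (abs_lt.mpr ⟨by linarith, hx₁⟩)
  have := sum_le_hasSum (Finset.range 2) (fun n _ => by positivity) hsum
  norm_num [Finset.sum_range_succ] at this
  linarith

lemma Real.neg_mul_log_le_one_sub {a : ℝ} (ha : 0 < a) : -(a * log a) ≤ 1 - a := by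
  have := mul_le_mul_of_nonneg_left (one_sub_inv_le_log_of_pos ha) ha.le
  rw [mul_sub, mul_inv_cancel₀ ha.ne'] at this
  linarith

lemma Real.one_add_mul_log_le_rpow {a : ℝ} (ha : 0 < a) (s : ℝ) : 1 + s * log a ≤ a ^ s := by
  rw [rpow_def_of_pos ha, mul_comm]
  linarith [add_one_le_exp (log a * s)]

lemma lt_neg_log_one_sub_mul_rpow {ρ t : ℝ} (hρ₀ : 0 < ρ) (hρ₁ : ρ < 1) (ht : 2 ≤ t) :
    ρ + ρ ^ 2 / 2 - ρ ^ 2 * t < -log (1 - ρ) * (1 - ρ) ^ t := by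
  set a := 1 - ρ with ha_def
  have ha : 0 < a := by linarith
  have hlog : ρ + ρ ^ 2 / 2 ≤ -log a := add_sq_div_two_le_neg_log_one_sub hρ₀.le hρ₁
  have hmul_log : 0 ≤ -(a * log a) ∧ -(a * log a) ≤ ρ :=
    ⟨by nlinarith [log_neg ha (by linarith : a < 1)], by linarith [neg_mul_log_le_one_sub ha]⟩
  have hsq : (a * log a) ^ 2 ≤ ρ ^ 2 := by nlinarith
  have hsplit : a ^ t = a ^ 2 * a ^ (t - 2) := by
    rw [← rpow_two, ← rpow_add ha, add_sub_cancel]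
  have hlog_sq : (ρ + ρ ^ 2 / 2) * a ^ 2 ≤ -log a * a ^ 2 :=
    mul_le_mul_of_nonneg_right hlog (sq_nonneg a)
  have hsq_mul : (t - 2) * (a * log a) ^ 2 ≤ (t - 2) * ρ ^ 2 :=
    mul_le_mul_of_nonneg_left hsq (by linarith)
  have htangent : -log a * a ^ 2 * (1 + (t - 2) * log a) ≤ -log a * a ^ 2 * a ^ (t - 2) :=
    mul_le_mul_of_nonneg_left (one_add_mul_log_le_rpow ha _) (by nlinarith)
  calc ρ + ρ ^ 2 / 2 - ρ ^ 2 * t < (ρ + ρ ^ 2 / 2) * a ^ 2 - (t - 2) * ρ ^ 2 := by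
        have : 0 < ρ ^ 4 := by positivity
        rw [ha_def]
        nlinarith
    _ ≤ -log a * a ^ 2 - (t - 2) * (a * log a) ^ 2 := by linarith
    _ = -log a * a ^ 2 * (1 + (t - 2) * log a) := by ring
    _ ≤ -log a * a ^ 2 * a ^ (t - 2) := htangent
    _ = -log a * a ^ t := by rw [hsplit, mul_assoc]

lemma hasDerivAt_quadratic_sub_rpow (k a L R x : ℝ) (ha : 0 < a) :
    HasDerivAt (fun x : ℝ => k * (L - 1 - x) * (L - x) + 1 - a ^ (x - L + R + 1))
      (k * (2 * x - 2 * L + 1) - log a * a ^ (x - L + R + 1)) x := by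
  have hquad : HasDerivAt (fun x : ℝ => k * (L - 1 - x) * (L - x))
      (k * -1 * (L - x) + k * (L - 1 - x) * -1) x :=
    (((hasDerivAt_id x).const_sub _).const_mul k).mul ((hasDerivAt_id x).const_sub L)
  have hpow : HasDerivAt (fun x : ℝ => a ^ (x - L + R + 1)) (log a * 1 * a ^ (x - L + R + 1)) x :=
    ((((hasDerivAt_id x).sub_const L).add_const R).add_const 1).const_rpow ha
  exact ((hquad.add_const 1).sub hpow).congr_deriv (by ring)

theorem stmt8_general (R : ℕ) (hR : 2 ≤ R) (L : ℝ) :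
    StrictMonoOn
      (fun x : ℝ =>
        ((1 / (R : ℝ)) ^ 2 / 2) * (L - 1 - x) * (L - x) + 1 -
          (1 - 1 / (R : ℝ)) ^ (x - L + (R : ℝ) + 1))
      (Set.Icc (L - R + 1) (L - 1)) := by
  have hR' : (2 : ℝ) ≤ R := by exact_mod_cast hR
  have hρ₀ : 0 < 1 / (R : ℝ) := by positivity
  have hρ₁ : 1 / (R : ℝ) < 1 := by rw [div_lt_one] <;> linarith
  have hderiv x :=
    hasDerivAt_quadratic_sub_rpow ((1 / (R : ℝ)) ^ 2 / 2) _ L R x (sub_pos.2 hρ₁)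
  refine strictMonoOn_of_deriv_pos (convex_Icc _ _)
    (fun x _ => (hderiv x).continuousAt.continuousWithinAt) fun x hx => ?_
  rw [interior_Icc] at hx
  rw [(hderiv x).deriv]
  have hbound := lt_neg_log_one_sub_mul_rpow hρ₀ hρ₁ (by linarith [hx.1] : 2 ≤ x - L + R + 1)
  have hlinear : (1 / (R : ℝ)) ^ 2 / 2 * (2 * x - 2 * L + 1)
      = (1 / (R : ℝ)) ^ 2 * (x - L + R + 1) - 1 / R - (1 / (R : ℝ)) ^ 2 / 2 := by
    field_simp
    ring
  linarith

/-- With `ρ = 1/R`, `h x = (ρ²/2)(L-1-x)(L-x) + 1 - (1-ρ)^(x-L+R+1)` (real power)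
is strictly increasing on `[L-R+1, L-1]` when `R ≥ 2` and `L ≥ 2R`. -/
theorem stmt8 (R : ℕ) (hR : 2 ≤ R) (L : ℝ) (hL : 2 * (R : ℝ) ≤ L) :
    StrictMonoOn
      (fun x : ℝ =>
        ((1 / (R : ℝ)) ^ 2 / 2) * (L - 1 - x) * (L - x) + 1 -
          (1 - 1 / (R : ℝ)) ^ (x - L + (R : ℝ) + 1))
      (Set.Icc (L - R + 1) (L - 1)) :=
  stmt8_general R hR L
end

section
/- Let R ≥ 2 be an integer, ρ = 1/R, and L ≥ 2R. Define p(x) = 1 - 2(1-ρ)^{x-L+1+R} + 2Lρ - 2xρ - 2ρ. Then p(x) > 0 for all x in [L-R, L-1]. In particular, the average queue-length cost a_n = n+1-R+2R(1-ρ)^{n-L+R+1} + ρ(L-1-n)(n-L) is strictly increasing for integer n in [L-R, L-1]. -/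
/-!
As a function of `x`, `p` is an affine function minus a positive multiple of the convex
function `x ↦ (1 - ρ)^x`, so it is concave and on `[L - R, L - 1]` it is at least
`min (p (L - R)) (p (L - 1)) = min 1 (1 - 2 (1 - ρ)^R)`, which is positive because
`(1 - 1/R)^R ≤ e⁻¹ < 1/2`. The increments of the average cost are `a (n + 1) - a n = p n`.
-/

open Real Set

lemma one_sub_one_div_pos {R : ℝ} (hR : 1 < R) : 0 < 1 - 1 / R := by
  rw [sub_pos, div_lt_one (by linarith)]; exact hR

lemma one_sub_one_div_rpow_self_lt_half {R : ℝ} (hR : 1 ≤ R) : (1 - 1 / R) ^ R < 1 / 2 := by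
  have hc : 0 ≤ 1 - 1 / R := by
    rw [sub_nonneg, div_le_one (by linarith)]; exact hR
  calc (1 - 1 / R) ^ R ≤ exp (-(1 / R)) ^ R :=
        rpow_le_rpow hc (by linarith [add_one_le_exp (-(1 / R))]) (by linarith)
    _ = exp (-1) := by rw [← exp_mul]; congr 1; field_simp
    _ < 1 / 2 := exp_neg_one_lt_half

/-- The paper's `p`, with `ρ = 1 / R`. -/
noncomputable def costIncrement (R L x : ℝ) : ℝ :=
  1 - 2 * (1 - 1 / R) ^ (x - L + 1 + R) + 2 * L * (1 / R) - 2 * x * (1 / R) - 2 * (1 / R)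

/-- The paper's average cost `a`, with `ρ = 1 / R`. -/
noncomputable def avgCost (R L y : ℝ) : ℝ :=
  y + 1 - R + 2 * R * (1 - 1 / R) ^ (y - L + R + 1) + (1 / R) * (L - 1 - y) * (y - L)

lemma concaveOn_costIncrement {R : ℝ} (hR : 1 < R) (L : ℝ) :
    ConcaveOn ℝ univ (costIncrement R L) := by
  have hpow : ConvexOn ℝ univ fun x : ℝ => (1 - 1 / R) ^ (x - L + 1 + R) := by
    have hc := one_sub_one_div_pos hR
    have hshift : (fun x : ℝ => (1 - 1 / R) ^ (x - L + 1 + R)) =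
        fun x => (1 - 1 / R) ^ (1 - L + R) • (1 - 1 / R) ^ x := by
      funext x
      rw [smul_eq_mul, ← rpow_add hc]
      ring_nf
    rw [hshift]
    exact (convexOn_rpow_left hc).smul (rpow_nonneg hc.le _)
  have hsplit : costIncrement R L = (fun _ => 1 + 2 * L * (1 / R) - 2 * (1 / R)) -
      ((2 : ℝ) • (fun x : ℝ => (1 - 1 / R) ^ (x - L + 1 + R)) + (2 * (1 / R)) • id) := by
    funext x
    simp only [costIncrement, Pi.sub_apply, Pi.add_apply, Pi.smul_apply, id, smul_eq_mul]
    ring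
  rw [hsplit]
  exact (concaveOn_const _ convex_univ).sub
    ((hpow.smul zero_le_two).add ((convexOn_id convex_univ).smul (by positivity)))

lemma costIncrement_pos {R L x : ℝ} (hR : 1 < R) (hx : x ∈ Icc (L - R) (L - 1)) :
    0 < costIncrement R L x := by
  have hleft : costIncrement R L (L - R) = 1 := by
    simp only [costIncrement, show L - R - L + 1 + R = 1 by ring, rpow_one]
    field_simp; ring
  have hright : costIncrement R L (L - 1) = 1 - 2 * (1 - 1 / R) ^ R := by
    simp only [costIncrement, show L - 1 - L + 1 + R = R by ring]
    ring
  have hmin := (concaveOn_costIncrement hR L).min_le_of_mem_Icc (mem_univ _) (mem_univ _) hx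
  rw [hleft, hright] at hmin
  have hhalf := one_sub_one_div_rpow_self_lt_half hR.le
  exact (lt_min one_pos (by linarith)).trans_le hmin

lemma avgCost_add_one_sub {R : ℝ} (hR : 1 < R) (L y : ℝ) :
    avgCost R L (y + 1) - avgCost R L y = costIncrement R L y := by
  have hc := one_sub_one_div_pos hR
  have hshift :
      (1 - 1 / R) ^ (y + 1 - L + R + 1) = (1 - 1 / R) ^ (y - L + 1 + R) * (1 - 1 / R) := by
    rw [← rpow_add_one hc.ne']; ring_nf
  simp only [avgCost, costIncrement, hshift, show y - L + R + 1 = y - L + 1 + R by ring]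
  field_simp
  ring

theorem stmt9_general (R L : ℤ) (hR : 2 ≤ R) :
    (∀ x : ℝ, (L : ℝ) - R ≤ x → x ≤ (L : ℝ) - 1 →
      0 < 1 - 2 * (1 - 1 / (R : ℝ)) ^ (x - L + 1 + (R : ℝ)) + 2 * L * (1 / (R : ℝ)) -
        2 * x * (1 / (R : ℝ)) - 2 * (1 / (R : ℝ))) ∧
    StrictMonoOn
      (fun n : ℤ =>
        (n : ℝ) + 1 - R + 2 * R * (1 - 1 / (R : ℝ)) ^ ((n : ℝ) - L + R + 1) +
          (1 / (R : ℝ)) * ((L : ℝ) - 1 - n) * ((n : ℝ) - L))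
      (Set.Icc (L - R) (L - 1)) := by
  have hR' : (1 : ℝ) < R := by exact_mod_cast hR
  refine ⟨fun x hx₁ hx₂ => costIncrement_pos hR' ⟨hx₁, hx₂⟩, ?_⟩
  refine strictMonoOn_of_lt_succ ordConnected_Icc fun n _ hn _ => ?_
  rw [Order.succ_eq_add_one]
  have hstep := avgCost_add_one_sub hR' L n
  have hpos : 0 < costIncrement R L n :=
    costIncrement_pos hR' ⟨by exact_mod_cast hn.1, by exact_mod_cast hn.2⟩
  show avgCost R L n < avgCost R L ((n + 1 : ℤ) : ℝ)
  push_cast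
  linarith

/-- With `ρ = 1/R`, `p x = 1 - 2(1-ρ)^(x-L+1+R) + 2Lρ - 2xρ - 2ρ` is positive on
`[L-R, L-1]`; consequently the average cost
`a n = n+1-R+2R(1-ρ)^(n-L+R+1) + ρ(L-1-n)(n-L)` is strictly increasing for
integer `n ∈ [L-R, L-1]`. -/
theorem stmt9 (R L : ℤ) (hR : 2 ≤ R) (hL : 2 * R ≤ L) :
    (∀ x : ℝ, (L : ℝ) - R ≤ x → x ≤ (L : ℝ) - 1 →
      0 < 1 - 2 * (1 - 1 / (R : ℝ)) ^ (x - L + 1 + (R : ℝ)) + 2 * L * (1 / (R : ℝ)) -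
        2 * x * (1 / (R : ℝ)) - 2 * (1 / (R : ℝ))) ∧
    StrictMonoOn
      (fun n : ℤ =>
        (n : ℝ) + 1 - R + 2 * R * (1 - 1 / (R : ℝ)) ^ ((n : ℝ) - L + R + 1) +
          (1 / (R : ℝ)) * ((L : ℝ) - 1 - n) * ((n : ℝ) - L))
      (Set.Icc (L - R) (L - 1)) :=
  stmt9_general R L hR
end

section
/- Let R ≥ 2, ρ = 1/R, and L ≥ 2R. Define p(x) = (x - R)(R-1) - 2R(L-1)·((ρ²/2)(L-1-x)(L-x) + 1 - (1-ρ)^{x-L+R+1} - 1/2 - 1/(2R)). Then p(x) ≥ 0 for all x in [L-R+1, L-1]. -/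
/-!
Write `p` for `slopeDiffNumerator r L`, `c = 1 - 1/r` and `K = 2r(L-1)`. Up to a polynomial of
degree two with leading coefficient `-K/(2r²)`, `p` is `K c^(x-L+r+1)`, whose second derivative is
`K (log c)² c^(x-L+r+1)`. Since `c |log c| ≤ 1 - c = 1/r` and the exponent is at least `2` on
`[L-r+1, ∞)`, `p` is concave there, so on `[L-r+1, L-1]` it is bounded below by its values at the
endpoints. These are `(L-2r+1)(r-1) ≥ 0` and `2r(L-1)c^r - r(r-1)`, which is positive because
`c^r ≥ 1/4` (Bernoulli's inequality gives `c^(r/2) ≥ 1/2`).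
-/

open Real Set

noncomputable def slopeDiffNumerator (r L x : ℝ) : ℝ :=
  (x - r) * (r - 1) -
    2 * r * (L - 1) *
      (((1 / r) ^ 2 / 2) * (L - 1 - x) * (L - x) + 1 -
        (1 - 1 / r) ^ (x - L + r + 1) - 1 / 2 - 1 / (2 * r))

noncomputable def slopeDiffNumeratorDeriv (r L x : ℝ) : ℝ :=
  (r - 1) + 2 * r * (L - 1) *
    ((1 / r) ^ 2 / 2 * (2 * L - 1 - 2 * x) + log (1 - 1 / r) * (1 - 1 / r) ^ (x - L + r + 1))

lemma sq_log_mul_rpow_le_sq_one_sub {c e : ℝ} (hc0 : 0 < c) (hc1 : c ≤ 1) (he : 2 ≤ e) :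
    log c ^ 2 * c ^ e ≤ (1 - c) ^ 2 := by
  have hpow : c ^ e ≤ c ^ 2 := by
    simpa using rpow_le_rpow_of_exponent_ge hc0 hc1 he
  have hlog : c * -log c ≤ 1 - c := by
    have := mul_le_mul_of_nonneg_left (one_sub_inv_le_log_of_pos hc0) hc0.le
    rw [mul_sub, mul_inv_cancel₀ hc0.ne'] at this
    linarith
  have hlog0 : 0 ≤ c * -log c := mul_nonneg hc0.le (neg_nonneg.2 (log_nonpos hc0.le hc1))
  calc log c ^ 2 * c ^ e ≤ log c ^ 2 * c ^ 2 := by gcongr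
    _ = (c * -log c) ^ 2 := by ring
    _ ≤ (1 - c) ^ 2 := by gcongr

lemma one_quarter_le_one_sub_inv_rpow_self {r : ℝ} (hr : 2 ≤ r) : 1 / 4 ≤ (1 - 1 / r) ^ r := by
  have hc : 0 ≤ 1 - 1 / r := by
    rw [sub_nonneg, div_le_one (by linarith)]; linarith
  have hbern : 1 + r / 2 * (-(1 / r)) ≤ (1 + -(1 / r)) ^ (r / 2) :=
    one_add_mul_self_le_rpow_one_add (by rw [neg_le_neg_iff, div_le_one (by linarith)]; linarith)
      (by linarith)
  have hhalf : 1 / 2 ≤ (1 - 1 / r) ^ (r / 2) := by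
    rw [← sub_eq_add_neg] at hbern
    field_simp at hbern ⊢
    linarith
  have hsq : (1 - 1 / r) ^ r = ((1 - 1 / r) ^ (r / 2)) ^ 2 := by
    rw [← rpow_natCast, ← rpow_mul hc]; norm_num
  rw [hsq]
  nlinarith

section

variable {r L : ℝ}

lemma hasDerivAt_slopeDiffNumerator (hr : 0 < 1 - 1 / r) (x : ℝ) :
    HasDerivAt (slopeDiffNumerator r L) (slopeDiffNumeratorDeriv r L x) x := by
  have hexp : HasDerivAt (fun x => (1 - 1 / r) ^ (x - L + r + 1))
      (log (1 - 1 / r) * 1 * (1 - 1 / r) ^ (x - L + r + 1)) x :=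
    ((((hasDerivAt_id' x).sub_const L).add_const r).add_const 1).const_rpow hr
  have hquad : HasDerivAt (fun x => (1 / r) ^ 2 / 2 * (L - 1 - x) * (L - x))
      ((1 / r) ^ 2 / 2 * (-1) * (L - x) + (1 / r) ^ 2 / 2 * (L - 1 - x) * (-1)) x :=
    (((hasDerivAt_id' x).const_sub (L - 1)).const_mul _).mul ((hasDerivAt_id' x).const_sub L)
  have hbracket := (((hquad.add_const 1).sub hexp).sub_const (1 / 2)).sub_const (1 / (2 * r))
  exact ((((hasDerivAt_id' x).sub_const r).mul_const (r - 1)).sub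
    (hbracket.const_mul (2 * r * (L - 1)))).congr_deriv (by rw [slopeDiffNumeratorDeriv]; ring)

lemma hasDerivAt_slopeDiffNumeratorDeriv (hr : 0 < 1 - 1 / r) (x : ℝ) :
    HasDerivAt (slopeDiffNumeratorDeriv r L)
      (2 * r * (L - 1) * (log (1 - 1 / r) ^ 2 * (1 - 1 / r) ^ (x - L + r + 1) - (1 / r) ^ 2)) x := by
  have hexp := ((((hasDerivAt_id' x).sub_const L).add_const r).add_const 1).const_rpow hr
  have hlin := (((hasDerivAt_id' x).const_mul 2).const_sub (2 * L - 1)).const_mul ((1 / r) ^ 2 / 2)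
  exact (((hlin.add (hexp.const_mul (log (1 - 1 / r)))).const_mul (2 * r * (L - 1))).const_add
    (r - 1)).congr_deriv (by ring)

lemma concaveOn_slopeDiffNumerator (hr : 1 < r) (hL : 1 ≤ L) :
    ConcaveOn ℝ (Ici (L - r + 1)) (slopeDiffNumerator r L) := by
  have hc0 : 0 < 1 - 1 / r := by
    rw [sub_pos, div_lt_one (by linarith)]; exact hr
  have hc1 : 1 - 1 / r ≤ 1 := sub_le_self 1 (by positivity)
  refine concaveOn_of_hasDerivWithinAt2_nonpos (convex_Ici _)
    (fun x _ => (hasDerivAt_slopeDiffNumerator hc0 x).continuousAt.continuousWithinAt)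
    (fun x _ => (hasDerivAt_slopeDiffNumerator hc0 x).hasDerivWithinAt)
    (fun x _ => (hasDerivAt_slopeDiffNumeratorDeriv hc0 x).hasDerivWithinAt) ?_
  intro x hx
  rw [interior_Ici, mem_Ioi] at hx
  have hcurv := sq_log_mul_rpow_le_sq_one_sub hc0 hc1 (e := x - L + r + 1) (by linarith)
  rw [sub_sub_cancel] at hcurv
  exact mul_nonpos_of_nonneg_of_nonpos (by nlinarith) (by linarith)

lemma slopeDiffNumerator_left_endpoint (hr : r ≠ 0) :
    slopeDiffNumerator r L (L - r + 1) = (L - 2 * r + 1) * (r - 1) := by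
  have hexp : L - r + 1 - L + r + 1 = 2 := by ring
  rw [slopeDiffNumerator, hexp, rpow_two]
  field_simp
  ring

lemma slopeDiffNumerator_right_endpoint (hr : r ≠ 0) :
    slopeDiffNumerator r L (L - 1) = 2 * r * (L - 1) * (1 - 1 / r) ^ r - r * (r - 1) := by
  have hexp : L - 1 - L + r + 1 = r := by ring
  rw [slopeDiffNumerator, hexp]
  field_simp
  ring

end

/-- With `ρ = 1/R`, the numerator
`p x = (x-R)(R-1) - 2R(L-1)·((ρ²/2)(L-1-x)(L-x) + 1 - (1-ρ)^(x-L+R+1) - 1/2 - 1/(2R))`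
is nonnegative on `[L-R+1, L-1]` when `R ≥ 2` and `L ≥ 2R`. -/
theorem stmt13 (R : ℕ) (hR : 2 ≤ R) (L : ℝ) (hL : 2 * (R : ℝ) ≤ L) :
    ∀ x : ℝ, L - R + 1 ≤ x → x ≤ L - 1 →
      0 ≤ (x - R) * ((R : ℝ) - 1) -
        2 * R * (L - 1) *
          (((1 / (R : ℝ)) ^ 2 / 2) * (L - 1 - x) * (L - x) + 1 -
            (1 - 1 / (R : ℝ)) ^ (x - L + (R : ℝ) + 1) - 1 / 2 - 1 / (2 * R)) := by
  intro x hx₁ hx₂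
  have hr : (2 : ℝ) ≤ R := by exact_mod_cast hR
  have hseg : x ∈ segment ℝ (L - R + 1) (L - 1) := by
    rw [segment_eq_Icc (by linarith)]; exact ⟨hx₁, hx₂⟩
  have hmin := (concaveOn_slopeDiffNumerator (by linarith) (by linarith)).ge_on_segment
    self_mem_Ici (show L - 1 ∈ Ici (L - R + 1) from mem_Ici.2 (by linarith)) hseg
  refine (le_min ?_ ?_).trans hmin
  · rw [slopeDiffNumerator_left_endpoint (by positivity)]
    nlinarith
  · rw [slopeDiffNumerator_right_endpoint (by positivity)]
    have hK : (0 : ℝ) ≤ 2 * R * (L - 1) := by nlinarith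
    nlinarith [mul_le_mul_of_nonneg_left (one_quarter_le_one_sub_inv_rpow_self hr) hK]
end
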